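/- Matrix content of Corollary 5 (Haar implementability): for N = 2^L with L ≥ 1, there exist permutation matrices P_0,…,P_L ∈ {0,1}^{N×N} and block diagonal matrices D_1,…,D_L ∈ ℂ^{N×N}, each of the form diag(D_{ℓ,1},…,D_{ℓ,C_ℓ}, e^{iθ_{ℓ,1}},…,e^{iθ_{ℓ,S_ℓ}}) with 2C_ℓ + S_ℓ = N and 2×2 blocks D_{ℓ,c} = (1/√2)·[[e^{iθ_{ℓ,c,11}}, e^{iθ_{ℓ,c,12}}],[e^{iθ_{ℓ,c,21}}, e^{iθ_{ℓ,c,22}}]] satisfying θ_{ℓ,c,22} = π − θ_{ℓ,c,11} + θ_{ℓ,c,12} + θ_{ℓ,c,21}, such that W_N = P_L·D_L·⋯·P_1·D_1·P_0. Moreover this holds with C_ℓ = 2^{L−ℓ}, S_ℓ = 2^L − 2^{L−ℓ+1}, and all phases θ_{ℓ,c,11} = θ_{ℓ,c,12} = θ_{ℓ,c,21} = 0 and θ_{ℓ,s} = 0. -/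

import Mathlib

open Matrix Complex

/-- Cast a square matrix along an equality of sizes. -/
noncomputable def castM {m n : ℕ} (h : m = n) (A : Matrix (Fin m) (Fin m) ℂ) :
    Matrix (Fin n) (Fin n) ℂ :=
  Matrix.reindex (finCongr h) (finCongr h) A

/-- The block diagonal matrix
`diag(D_1, …, D_C, e^{iφ_1}, …, e^{iφ_S})` where
`D_c = (1/√2)·[[e^{iθ11(c)}, e^{iθ12(c)}],[e^{iθ21(c)}, e^{i(π − θ11(c) + θ12(c) + θ21(c))}]]`. -/
noncomputable def layerMatrix (C S : ℕ) (θ11 θ12 θ21 : Fin C → ℝ) (φ : Fin S → ℝ) :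
    Matrix (Fin (2 * C + S)) (Fin (2 * C + S)) ℂ :=
  Matrix.of fun i k =>
    if hi : i.val < 2 * C then
      if hk : k.val < 2 * C then
        if i.val / 2 = k.val / 2 then
          (1 / (Real.sqrt 2 : ℂ)) * Complex.exp (Complex.I *
            (((if i.val % 2 = 0 then
                  (if k.val % 2 = 0 then θ11 ⟨i.val / 2, by omega⟩
                   else θ12 ⟨i.val / 2, by omega⟩)
                else
                  (if k.val % 2 = 0 then θ21 ⟨i.val / 2, by omega⟩
                   else Real.pi - θ11 ⟨i.val / 2, by omega⟩ + θ12 ⟨i.val / 2, by omega⟩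
                        + θ21 ⟨i.val / 2, by omega⟩)) : ℝ) : ℂ))
        else 0
      else 0
    else if i = k then
      Complex.exp (Complex.I * ((φ ⟨i.val - 2 * C, by have := i.isLt; omega⟩ : ℝ) : ℂ))
    else 0

/-- A matrix is a permutation matrix if it is the 0/1 matrix of some permutation. -/
def IsPermutationMatrix {n : ℕ} (A : Matrix (Fin n) (Fin n) ℂ) : Prop :=
  ∃ σ : Equiv.Perm (Fin n), ∀ i k, A i k = if σ i = k then 1 else 0

/-- An `N×N` matrix has the layer form of Theorem 1: it is block diagonal
`diag(D_{1},…,D_{C}, e^{iθ_1},…,e^{iθ_S})` with `2C + S = N`, where each 2×2 block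
`D_c = (1/√2)·[[e^{iθ11}, e^{iθ12}],[e^{iθ21}, e^{iθ22}]]` satisfies
`θ22 = π − θ11 + θ12 + θ21`. -/
def LayerForm {N : ℕ} (Dm : Matrix (Fin N) (Fin N) ℂ) : Prop :=
  ∃ (C S : ℕ) (hCS : 2 * C + S = N) (θ11 θ12 θ21 : Fin C → ℝ) (φ : Fin S → ℝ),
    Dm = castM hCS (layerMatrix C S θ11 θ12 θ21 φ)

/-- 2×2 block matrix `[[A, B],[C, D]]` with m×m blocks, as an `(m+m)×(m+m)` matrix. -/
noncomputable def fromBlocks2 {m : ℕ} (A B C D : Matrix (Fin m) (Fin m) ℂ) :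
    Matrix (Fin (m + m)) (Fin (m + m)) ℂ :=
  Matrix.reindex finSumFinEquiv finSumFinEquiv (Matrix.fromBlocks A B C D)

/-- The Haar matrices: `W_1 = 1` and
`W_{2^{L+1}} = (1/√2)·[[W_{2^L}, W_{2^L}],[I, −I]]`. -/
noncomputable def haarMat : (L : ℕ) → Matrix (Fin (2 ^ L)) (Fin (2 ^ L)) ℂ
  | 0 => 1
  | L + 1 =>
      castM (by ring)
        ((1 / (Real.sqrt 2 : ℂ)) • fromBlocks2 (haarMat L) (haarMat L) 1 (-1))

/-! `W_{2N} = diag(W_N, I) · B` with `B = (1/√2)·[[I, I], [I, -I]]`, and conjugating `B` by the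
perfect shuffle of `2N` ports turns it into `N` Hadamard blocks `(1/√2)·[[1, 1], [1, -1]]`,
which are the zero-phase blocks of the layer form because `e^{iπ} = -1`. Padding a decomposition
of `W_N` by the identity keeps every layer's blocks and adds `N` unpaired ports, so by induction
the `ℓ`-th layer of `W_{2^L}` has `2^{L-ℓ}` blocks. -/

open Equiv

section PermLayerProd

variable {ι κ R : Type*} [Fintype ι] [DecidableEq ι] [Fintype κ] [DecidableEq κ] [Semiring R]

def permLayerProd {L : ℕ} (P : Fin (L + 1) → Perm ι) (D : Fin L → Matrix ι ι R) :
    Matrix ι ι R :=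
  ((List.finRange L).reverse.map fun i => (P i.succ).permMatrix R * D i).prod * (P 0).permMatrix R

theorem permLayerProd_zero (P : Fin 1 → Perm ι) (D : Fin 0 → Matrix ι ι R) :
    permLayerProd P D = (P 0).permMatrix R := by
  simp [permLayerProd]

theorem permLayerProd_cons {L : ℕ} (ρ : Perm ι) (P : Fin (L + 1) → Perm ι) (X : Matrix ι ι R)
    (D : Fin L → Matrix ι ι R) :
    permLayerProd (Fin.cons ρ P) (Fin.cons X D) = permLayerProd P D * X * ρ.permMatrix R := by
  simp only [permLayerProd, List.finRange_succ, List.reverse_cons, List.map_append,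
    List.prod_append, List.map_reverse, List.map_map]
  simp [Function.comp_def, mul_assoc]

theorem permLayerProd_mul_permMatrix {L : ℕ} (P : Fin (L + 1) → Perm ι)
    (D : Fin L → Matrix ι ι R) (τ : Perm ι) :
    permLayerProd P D * τ.permMatrix R = permLayerProd (Function.update P 0 (τ * P 0)) D := by
  simp [permLayerProd, mul_assoc, Fin.succ_ne_zero]

theorem map_permLayerProd (φ : Matrix ι ι R →* Matrix κ κ R) (ψ : Perm ι → Perm κ)
    (hψ : ∀ σ, φ (σ.permMatrix R) = (ψ σ).permMatrix R) {L : ℕ} (P : Fin (L + 1) → Perm ι)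
    (D : Fin L → Matrix ι ι R) :
    φ (permLayerProd P D) = permLayerProd (ψ ∘ P) (φ ∘ D) := by
  simp [permLayerProd, map_list_prod, hψ, Function.comp_def]

end PermLayerProd

theorem fromBlocks2_apply {m : ℕ} (A B C D : Matrix (Fin m) (Fin m) ℂ) (i k : Fin (m + m)) :
    fromBlocks2 A B C D i k =
      if hi : (i : ℕ) < m then
        if hk : (k : ℕ) < m then A ⟨i, hi⟩ ⟨k, hk⟩ else B ⟨i, hi⟩ ⟨k - m, by omega⟩
      else
        if hk : (k : ℕ) < m then C ⟨i - m, by omega⟩ ⟨k, hk⟩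
        else D ⟨i - m, by omega⟩ ⟨k - m, by omega⟩ := by
  obtain ⟨a, rfl⟩ := finSumFinEquiv.surjective i
  obtain ⟨b, rfl⟩ := finSumFinEquiv.surjective k
  simp only [fromBlocks2, reindex_apply, submatrix_apply, symm_apply_apply]
  rcases a with a | a <;> rcases b with b | b <;> simp

theorem fromBlocks2_mul {m : ℕ} (A B C D A' B' C' D' : Matrix (Fin m) (Fin m) ℂ) :
    fromBlocks2 A B C D * fromBlocks2 A' B' C' D' =
      fromBlocks2 (A * A' + B * C') (A * B' + B * D') (C * A' + D * C') (C * B' + D * D') := by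
  simp only [fromBlocks2, reindex_apply, submatrix_mul_equiv, fromBlocks_multiply]

noncomputable def padOne (m : ℕ) :
    Matrix (Fin m) (Fin m) ℂ →* Matrix (Fin (m + m)) (Fin (m + m)) ℂ where
  toFun A := fromBlocks2 A 0 0 1
  map_one' := by simp [fromBlocks2]
  map_mul' A B := by simp [fromBlocks2_mul]

def padPerm {m : ℕ} (τ : Perm (Fin m)) : Perm (Fin (m + m)) :=
  finSumFinEquiv.permCongr (τ.sumCongr (Equiv.refl _))

theorem padOne_permMatrix {m : ℕ} (τ : Perm (Fin m)) :
    padOne m (τ.permMatrix ℂ) = (padPerm τ).permMatrix ℂ := by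
  ext i k
  obtain ⟨a, rfl⟩ := finSumFinEquiv.surjective i
  obtain ⟨b, rfl⟩ := finSumFinEquiv.surjective k
  simp only [padOne, padPerm, fromBlocks2, MonoidHom.coe_mk, OneHom.coe_mk, reindex_apply,
    submatrix_apply, permCongr_apply, Equiv.symm_apply_apply, PEquiv.toMatrix_apply,
    toPEquiv_apply, Option.mem_def, Option.some.injEq, EmbeddingLike.apply_eq_iff_eq]
  rcases a with a | a <;> rcases b with b | b <;> simp [one_apply]

theorem castM_permMatrix {m n : ℕ} (h : m = n) (τ : Perm (Fin m)) :
    castM h (τ.permMatrix ℂ) = ((finCongr h).permCongr τ).permMatrix ℂ := by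
  subst h
  ext i k
  simp [castM]

/-- `diag(H, …, H, 1, …, 1)` with `C` copies of `H = (1/√2)·[[1, 1], [1, -1]]`, read off the
values of the indices so that no cast along `2 * C + S = n` is needed. -/
noncomputable def hadamardLayer (C n : ℕ) : Matrix (Fin n) (Fin n) ℂ :=
  of fun i k =>
    if (i : ℕ) < 2 * C then
      if (i : ℕ) / 2 = (k : ℕ) / 2 then
        (if (i : ℕ) % 2 = 1 ∧ (k : ℕ) % 2 = 1 then -1 else 1) / (Real.sqrt 2 : ℂ)
      else 0
    else if i = k then 1 else 0

theorem castM_layerMatrix_zero {C S n : ℕ} (h : 2 * C + S = n) :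
    castM h (layerMatrix C S (fun _ => 0) (fun _ => 0) (fun _ => 0) (fun _ => 0)) =
      hadamardLayer C n := by
  subst h
  ext i k
  simp only [castM, layerMatrix, hadamardLayer, reindex_apply, submatrix_apply, of_apply,
    finCongr_refl, Equiv.refl_symm, Equiv.refl_apply]
  split_ifs <;> first | rfl | omega | simp [mul_comm I, exp_pi_mul_I, neg_div]

theorem castM_hadamardLayer {m n : ℕ} (h : m = n) (C : ℕ) :
    castM h (hadamardLayer C m) = hadamardLayer C n := by
  subst h
  rfl

theorem padOne_hadamardLayer {C m : ℕ} (hC : 2 * C ≤ m) :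
    padOne m (hadamardLayer C m) = hadamardLayer C (m + m) := by
  ext i k
  simp only [padOne, MonoidHom.coe_mk, OneHom.coe_mk, fromBlocks2_apply, hadamardLayer, of_apply,
    Matrix.zero_apply, one_apply, Fin.ext_iff]
  split_ifs <;> first | rfl | omega

def interleave (m : ℕ) : Perm (Fin (m + m)) :=
  (finCongr (two_mul m).symm).trans <| finProdFinEquiv.symm.trans <|
    (Equiv.prodComm _ _).trans <| finProdFinEquiv.trans (finCongr (mul_two m))

theorem interleave_val {m : ℕ} (i : Fin (m + m)) :
    (interleave m i : ℕ) = if (i : ℕ) < m then 2 * (i : ℕ) else 2 * ((i : ℕ) - m) + 1 := by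
  have hi := i.isLt
  simp only [interleave, trans_apply, finCongr_apply, finProdFinEquiv_symm_apply, prodComm_apply,
    Prod.swap_prod_mk, Fin.val_cast, finProdFinEquiv_apply_val, Fin.coe_divNat, Fin.coe_modNat]
  split_ifs with h
  · rw [Nat.mod_eq_of_lt h, Nat.div_eq_of_lt h]; ring
  · rw [Nat.div_eq_of_lt_le (k := 1) (by omega) (by omega), Nat.mod_eq_sub_mod (by omega),
      Nat.mod_eq_of_lt (by omega)]
    ring

noncomputable def butterfly (m : ℕ) : Matrix (Fin (m + m)) (Fin (m + m)) ℂ :=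
  (1 / (Real.sqrt 2 : ℂ)) • fromBlocks2 1 1 1 (-1)

theorem butterfly_eq_conj_hadamardLayer (m : ℕ) :
    butterfly m =
      (interleave m).permMatrix ℂ * hadamardLayer m (m + m) * (interleave m)⁻¹.permMatrix ℂ := by
  ext i k
  rw [PEquiv.toMatrix_toPEquiv_mul, PEquiv.mul_toMatrix_toPEquiv]
  simp only [butterfly, Matrix.smul_apply, fromBlocks2_apply, submatrix_apply, id, Perm.inv_def,
    Equiv.symm_symm, hadamardLayer, of_apply, interleave_val, one_apply, Matrix.neg_apply,
    Fin.ext_iff, smul_eq_mul]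
  split_ifs <;> first | omega | ring

theorem haarMat_succ (L : ℕ) :
    haarMat (L + 1) = castM (by ring) (padOne (2 ^ L) (haarMat L) * butterfly (2 ^ L)) := by
  simp [haarMat, padOne, butterfly, fromBlocks2_mul]

theorem two_mul_two_pow_sub_le {L ℓ : ℕ} (h : ℓ < L) : 2 * 2 ^ (L - (ℓ + 1)) ≤ 2 ^ L := by
  rw [← pow_succ']
  exact Nat.pow_le_pow_right two_pos (by omega)

theorem haarMat_eq_permLayerProd (L : ℕ) :
    ∃ P : Fin (L + 1) → Perm (Fin (2 ^ L)),
      haarMat L = permLayerProd P fun i : Fin L => hadamardLayer (2 ^ (L - (i + 1))) (2 ^ L) := by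
  induction L with
  | zero => exact ⟨1, by simp [haarMat, permLayerProd_zero]⟩
  | succ L ih =>
    obtain ⟨P, hP⟩ := ih
    have e : 2 ^ L + 2 ^ L = 2 ^ (L + 1) := by ring
    set ρ := interleave (2 ^ L)
    have layers : castM e ∘ Fin.cons (hadamardLayer (2 ^ L) (2 ^ L + 2 ^ L))
        (padOne _ ∘ fun i : Fin L => hadamardLayer (2 ^ (L - (i + 1))) (2 ^ L)) =
          fun i : Fin (L + 1) => hadamardLayer (2 ^ (L + 1 - (i + 1))) (2 ^ (L + 1)) := by
      funext i
      refine Fin.cases ?_ (fun i => ?_) i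
      · simp [castM_hadamardLayer]
      · simp [padOne_hadamardLayer (two_mul_two_pow_sub_le i.isLt), castM_hadamardLayer]
    refine ⟨(finCongr e).permCongr ∘
      Fin.cons ρ⁻¹ (Function.update (padPerm ∘ P) 0 (ρ * padPerm (P 0))), ?_⟩
    rw [haarMat_succ, hP, butterfly_eq_conj_hadamardLayer, ← mul_assoc, ← mul_assoc,
      map_permLayerProd (padOne _) padPerm padOne_permMatrix, permLayerProd_mul_permMatrix,
      ← permLayerProd_cons, ← layers]
    exact map_permLayerProd (reindexRingEquiv ℂ (finCongr e)).toMonoidHom _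
      (castM_permMatrix e) _ _

theorem isPermutationMatrix_permMatrix {n : ℕ} (σ : Perm (Fin n)) :
    IsPermutationMatrix (σ.permMatrix ℂ) :=
  ⟨σ, fun i k => by simp [PEquiv.toMatrix_apply]⟩

/-- **Matrix content of Corollary 5 (Haar implementability)**: for `N = 2^L`, `L ≥ 1`, the
Haar matrix has a decomposition `W_N = P_L·D_L·⋯·P_1·D_1·P_0` with permutation matrices
`P_ℓ` and layer matrices `D_ℓ` as in Theorem 1; moreover this holds with
`C_ℓ = 2^{L−ℓ}`, `S_ℓ = 2^L − 2^{L−ℓ+1}`, and all phases zero. -/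
theorem haar_implementable (L : ℕ) :
    (∃ (P : Fin (L + 1) → Matrix (Fin (2 ^ L)) (Fin (2 ^ L)) ℂ)
        (D : Fin L → Matrix (Fin (2 ^ L)) (Fin (2 ^ L)) ℂ),
        (∀ ℓ, IsPermutationMatrix (P ℓ)) ∧ (∀ ℓ, LayerForm (D ℓ)) ∧
        haarMat L =
          ((List.finRange L).reverse.map fun i => P i.succ * D i).prod * P 0)
    ∧
    (∃ P : Fin (L + 1) → Matrix (Fin (2 ^ L)) (Fin (2 ^ L)) ℂ,
      (∀ ℓ, IsPermutationMatrix (P ℓ)) ∧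
      haarMat L =
        ((List.finRange L).reverse.map fun i : Fin L =>
            P i.succ *
              castM
                (show 2 * 2 ^ (L - (i.val + 1)) + (2 ^ L - 2 ^ (L - (i.val + 1) + 1)) = 2 ^ L by
                  have hi := i.isLt
                  have h2 : (2 : ℕ) ^ (L - (i.val + 1) + 1) ≤ 2 ^ L :=
                    Nat.pow_le_pow_right (by norm_num) (by omega)
                  rw [← pow_succ']
                  exact Nat.add_sub_cancel' h2)
                (layerMatrix (2 ^ (L - (i.val + 1))) (2 ^ L - 2 ^ (L - (i.val + 1) + 1))
                  (fun _ => 0) (fun _ => 0) (fun _ => 0) (fun _ => 0))).prod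
          * P 0) := by
  obtain ⟨P, hP⟩ := haarMat_eq_permLayerProd L
  have size (i : Fin L) :
      2 * 2 ^ (L - (i + 1)) + (2 ^ L - 2 ^ (L - (i + 1) + 1)) = 2 ^ L := by
    have := two_mul_two_pow_sub_le i.isLt
    rw [pow_succ']
    omega
  refine ⟨⟨fun ℓ => (P ℓ).permMatrix ℂ, _, fun ℓ => isPermutationMatrix_permMatrix _,
    fun i => ⟨_, _, size i, _, _, _, _, (castM_layerMatrix_zero (size i)).symm⟩, hP⟩,
    fun ℓ => (P ℓ).permMatrix ℂ, fun ℓ => isPermutationMatrix_permMatrix _, ?_⟩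
  simp only [castM_layerMatrix_zero]
  exact hP
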